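/- arXiv:0911.5703 — 6 statements merged into one kernel-verified Lean document; each statement's English description precedes it below -/
import Mathlib

section
/- Let r be a relation on a finite vertex set V. Every vertex lying on a directed cycle of (V, r) belongs to the grounding kernel; more precisely, if Relation.TransGen r v v holds, then v ∈ Out0^[n](V) for every n, and hence v lies in the grounding kernel K. -/
/-! The vertices on cycles form a set in which every vertex has a successor inside the set,
and such a set never loses a vertex to sink removal. -/

/-- The sink-removal operator: `Out0 r S` keeps exactly the vertices of `S`
that have a successor inside `S` (i.e. removes the sinks of the subgraph
induced on `S`). -/
def Out0 {V : Type*} (r : V → V → Prop) (S : Set V) : Set V :=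
  {v ∈ S | ∃ u ∈ S, r v u}

theorem Relation.TransGen.exists_succ_on_cycle {V : Type*} {r : V → V → Prop} {w : V}
    (hw : Relation.TransGen r w w) : ∃ u, Relation.TransGen r u u ∧ r w u := by
  obtain ⟨u, hwu, huw⟩ := Relation.TransGen.head'_iff.mp hw
  exact ⟨u, .tail' huw hwu, hwu⟩

section Out0

variable {V : Type*} {r : V → V → Prop} {S T : Set V}

theorem subset_out0 (hST : S ⊆ T) (hS : ∀ v ∈ S, ∃ u ∈ S, r v u) : S ⊆ Out0 r T := by
  intro v hv
  obtain ⟨u, hu, hvu⟩ := hS v hv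
  exact ⟨hST hv, u, hST hu, hvu⟩

theorem subset_iterate_out0 (hST : S ⊆ T) (hS : ∀ v ∈ S, ∃ u ∈ S, r v u) (n : ℕ) :
    S ⊆ (Out0 r)^[n] T := by
  induction n with
  | zero => exact hST
  | succ n ih =>
    rw [Function.iterate_succ_apply']
    exact subset_out0 ih hS

theorem setOf_transGen_self_subset_iterate_out0 (n : ℕ) :
    {w | Relation.TransGen r w w} ⊆ (Out0 r)^[n] Set.univ :=
  subset_iterate_out0 (Set.subset_univ _)
    (fun _ hw => hw.exists_succ_on_cycle) n

end Out0

theorem cycle_mem_grounding_kernel_general {V : Type*} (r : V → V → Prop)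
    (K : Set V)
    (hK : ∃ ℓ : ℕ, ∀ n : ℕ, n ≥ ℓ → (Out0 r)^[n] (Set.univ : Set V) = K)
    (v : V) (hv : Relation.TransGen r v v) :
    (∀ n : ℕ, v ∈ (Out0 r)^[n] (Set.univ : Set V)) ∧ v ∈ K := by
  have hmem (n : ℕ) : v ∈ (Out0 r)^[n] Set.univ :=
    setOf_transGen_self_subset_iterate_out0 n hv
  obtain ⟨ℓ, hℓ⟩ := hK
  exact ⟨hmem, hℓ ℓ le_rfl ▸ hmem ℓ⟩

/-- Every vertex lying on a directed cycle belongs to every iterate of `Out0`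
starting from `V`, and hence lies in the grounding kernel `K` (the stable
value of the iteration). -/
theorem cycle_mem_grounding_kernel {V : Type*} [Finite V] (r : V → V → Prop)
    (K : Set V)
    (hK : ∃ ℓ : ℕ, ∀ n : ℕ, n ≥ ℓ → (Out0 r)^[n] (Set.univ : Set V) = K)
    (v : V) (hv : Relation.TransGen r v v) :
    (∀ n : ℕ, v ∈ (Out0 r)^[n] (Set.univ : Set V)) ∧ v ∈ K :=
  cycle_mem_grounding_kernel_general r K hK v hv
end

section
/- Let r be a relation on a finite vertex set V and let K be the grounding kernel of (V, r). Then K is a grounding set: the subgraph induced on the complement V \ K is acyclic, i.e., there is no vertex v ∈ V \ K admitting a nonempty directed path from v back to v that uses only vertices of V \ K. -/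
/-! Every vertex lying on an `r`-cycle has its successor on that cycle inside the cycle again, so
the set of such vertices is a post-fixed point of the monotone operator `Out0 r`. A post-fixed
point below the starting set survives every iteration, hence lies in the kernel. A cycle avoiding
the kernel is in particular an `r`-cycle, so it cannot exist. -/

theorem Monotone.le_iterate_of_le_map {α : Type*} [Preorder α] {f : α → α} (hf : Monotone f)
    {x y : α} (hx : x ≤ f x) (hxy : x ≤ y) (n : ℕ) : x ≤ f^[n] y :=
  calc x ≤ f^[n] x := hf.monotone_iterate_of_le_map hx (Nat.zero_le n)
    _ ≤ f^[n] y := hf.iterate n hxy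

theorem monotone_Out0 {V : Type*} (r : V → V → Prop) : Monotone (Out0 r) := by
  rintro S T hST v ⟨hv, u, hu, hvu⟩
  exact ⟨hST hv, u, hST hu, hvu⟩

theorem setOf_transGen_self_subset_Out0 {V : Type*} (r : V → V → Prop) :
    {v | Relation.TransGen r v v} ⊆ Out0 r {v | Relation.TransGen r v v} := by
  intro v hv
  obtain ⟨u, hvu, huv⟩ := Relation.TransGen.head'_iff.mp hv
  exact ⟨hv, u, Relation.TransGen.tail' huv hvu, hvu⟩

theorem transGen_self_mem_iterate_Out0 {V : Type*} (r : V → V → Prop) {v : V}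
    (hv : Relation.TransGen r v v) (n : ℕ) : v ∈ (Out0 r)^[n] Set.univ :=
  (monotone_Out0 r).le_iterate_of_le_map (setOf_transGen_self_subset_Out0 r)
    (Set.subset_univ _) n hv

theorem grounding_kernel_is_grounding_set_general {V : Type*}
    (r : V → V → Prop) (K : Set V)
    (hK : ∃ ℓ : ℕ, ∀ n : ℕ, n ≥ ℓ → (Out0 r)^[n] (Set.univ : Set V) = K) :
    ∀ v ∉ K, ¬ Relation.TransGen (fun a b => a ∉ K ∧ b ∉ K ∧ r a b) v v := by
  obtain ⟨ℓ, hℓ⟩ := hK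
  intro v hvK hcycle
  have hr_cycle : Relation.TransGen r v v :=
    Relation.TransGen.mono (fun _ _ hab => hab.2.2) _ _ hcycle
  exact hvK (hℓ ℓ le_rfl ▸ transGen_self_mem_iterate_Out0 r hr_cycle ℓ)

/-- The grounding kernel `K` (stable value of iterating `Out0` from `V`) is a
grounding set: the subgraph induced on the complement of `K` is acyclic, i.e.
no vertex outside `K` admits a nonempty directed path back to itself that
uses only vertices outside `K`. -/
theorem grounding_kernel_is_grounding_set {V : Type*} [Finite V]
    (r : V → V → Prop) (K : Set V)
    (hK : ∃ ℓ : ℕ, ∀ n : ℕ, n ≥ ℓ → (Out0 r)^[n] (Set.univ : Set V) = K) :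
    ∀ v ∉ K, ¬ Relation.TransGen (fun a b => a ∉ K ∧ b ∉ K ∧ r a b) v v :=
  grounding_kernel_is_grounding_set_general r K hK
end

section
/- Let r be a relation on a finite vertex set V and let U ⊆ V be a grounding set that is minimal with respect to inclusion (no proper subset of U is a grounding set). Then every vertex u ∈ U lies on a directed cycle of (V, r), i.e., Relation.TransGen r u u holds. -/
/-- `U` is a grounding set (feedback vertex set) for `r`: the subgraph induced
on the complement of `U` is acyclic, i.e. no vertex outside `U` lies on a
nonempty directed path from itself back to itself using only vertices
outside `U`. -/
def IsGroundingSet {V : Type*} (r : V → V → Prop) (U : Set V) : Prop :=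
  ∀ v ∉ U, ¬ Relation.TransGen (fun a b => a ∉ U ∧ b ∉ U ∧ r a b) v v

/-! Removing `u` from a minimal grounding set `U` must create a cycle outside `U \ {u}`. Such a
cycle cannot stay outside `U`, since `U` is a grounding set, so it passes through `u`. -/

namespace Relation

theorem TransGen.restrict_or_visits {α : Type*} {r : α → α → Prop} (p : α → Prop) {a b : α}
    (h : TransGen r a b) :
    TransGen (fun x y => p x ∧ p y ∧ r x y) a b ∨
      ∃ c, ¬ p c ∧ ReflTransGen r a c ∧ ReflTransGen r c b := by
  induction h with
  | @single b hab =>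
    by_cases ha : p a
    · by_cases hb : p b
      · exact .inl (.single ⟨ha, hb, hab⟩)
      · exact .inr ⟨b, hb, .single hab, .refl⟩
    · exact .inr ⟨a, ha, .refl, .single hab⟩
  | @tail b c hab hbc ih =>
    rcases ih with ih | ⟨d, hd, had, hdb⟩
    · by_cases hb : p b
      · by_cases hc : p c
        · exact .inl (ih.tail ⟨hb, hc, hbc⟩)
        · exact .inr ⟨c, hc, (hab.tail hbc).to_reflTransGen, .refl⟩
      · exact .inr ⟨b, hb, hab.to_reflTransGen, .single hbc⟩
    · exact .inr ⟨d, hd, had, hdb.tail hbc⟩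

end Relation

open Relation

theorem minimal_grounding_set_mem_cycle_general {V : Type*}
    (r : V → V → Prop) (U : Set V)
    (hU : IsGroundingSet r U)
    (hmin : ∀ U' : Set V, U' ⊂ U → ¬ IsGroundingSet r U') :
    ∀ u ∈ U, Relation.TransGen r u u := by
  intro u hu
  obtain ⟨v, hv, hcyc⟩ : ∃ v ∉ U \ {u},
      TransGen (fun a b => a ∉ U \ {u} ∧ b ∉ U \ {u} ∧ r a b) v v := by
    simpa [IsGroundingSet] using hmin _ (Set.sdiff_singleton_ssubset.2 hu)
  have hcyc_r : TransGen r v v := TransGen.mono (fun _ _ h => h.2.2) _ _ hcyc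
  rcases hcyc.restrict_or_visits (· ≠ u) with hcyc_u | ⟨c, hcu, hvc, hcv⟩
  · by_cases hvu : v = u
    · exact hvu ▸ hcyc_r
    refine absurd (TransGen.mono ?_ _ _ hcyc_u) (hU v fun hvU => hv ⟨hvU, hvu⟩)
    rintro x y ⟨hxu, hyu, hx, hy, hxy⟩
    exact ⟨fun h => hx ⟨h, hxu⟩, fun h => hy ⟨h, hyu⟩, hxy⟩
  · obtain rfl : u = c := (not_not.1 hcu).symm
    have forget : ∀ {a b}, ReflTransGen (fun a b => a ∉ U \ {u} ∧ b ∉ U \ {u} ∧ r a b) a b →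
        ReflTransGen r a b := ReflTransGen.mono (fun _ _ h => h.2.2) _ _
    exact (TransGen.trans_right (forget hcv) hcyc_r).trans_left (forget hvc)

/-- If `U` is a grounding set that is minimal with respect to inclusion (no
proper subset of `U` is a grounding set), then every vertex of `U` lies on a
directed cycle of `(V, r)`. -/
theorem minimal_grounding_set_mem_cycle {V : Type*} [Finite V]
    (r : V → V → Prop) (U : Set V)
    (hU : IsGroundingSet r U)
    (hmin : ∀ U' : Set V, U' ⊂ U → ¬ IsGroundingSet r U') :
    ∀ u ∈ U, Relation.TransGen r u u :=
  minimal_grounding_set_mem_cycle_general r U hU hmin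
end

section
/- Let r be a relation on a finite vertex set V, let K be the grounding kernel of (V, r), and let U ⊆ V be a grounding set of minimum cardinality (a minimum grounding set, MGS). Then U ⊆ K: every minimum grounding set is included in the grounding kernel. -/
/-!
Every vertex lying on a cycle of `r` survives every round of sink removal, so the
kernel `K` contains all cyclic vertices. A cycle avoiding `U ∩ K` consists of cyclic
vertices, hence avoids `U` as well; so `U ∩ K` is again a grounding set, and by
minimality of `U` it cannot be a proper subset of `U`.
-/

namespace Relation.TransGen

variable {α : Type*} {p : α → α → Prop}

theorem edges_returning_of_cycle {x y : α} (hxy : TransGen p x y) (hyx : TransGen p y x) :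
    TransGen (fun a b => p a b ∧ TransGen p b a) x y := by
  induction hxy using head_induction_on with
  | single hxy => exact single ⟨hxy, hyx⟩
  | head hxc hcy ih => exact head ⟨hxc, hcy.trans hyx⟩ (ih (hyx.trans (single hxc)))

end Relation.TransGen

open Relation

section

variable {V : Type*} {r : V → V → Prop}

theorem cyclic_subset_Out0 {S : Set V} (hS : {v | TransGen r v v} ⊆ S) :
    {v | TransGen r v v} ⊆ Out0 r S := by
  intro v hv
  obtain ⟨u, hvu, huv⟩ := TransGen.head'_iff.mp hv
  exact ⟨hS hv, u, hS (TransGen.trans_right huv (.single hvu)), hvu⟩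

theorem cyclic_subset_iterate_Out0 (n : ℕ) :
    {v | TransGen r v v} ⊆ (Out0 r)^[n] Set.univ := by
  induction n with
  | zero => exact Set.subset_univ _
  | succ n ih =>
    rw [Function.iterate_succ_apply']
    exact cyclic_subset_Out0 ih

theorem IsGroundingSet.inter_of_cyclic_subset {U C : Set V} (hU : IsGroundingSet r U)
    (hC : {v | TransGen r v v} ⊆ C) : IsGroundingSet r (U ∩ C) := by
  intro v hv hcycle
  have toR : ∀ a b, (a ∉ U ∩ C ∧ b ∉ U ∩ C ∧ r a b) → r a b := fun _ _ h => h.2.2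
  have not_mem_U : ∀ a, a ∉ U ∩ C → TransGen r a a → a ∉ U :=
    fun a ha hcyc haU => ha ⟨haU, hC hcyc⟩
  refine hU v (not_mem_U v hv (TransGen.mono toR _ _ hcycle)) ?_
  refine TransGen.mono ?_ _ _ (TransGen.edges_returning_of_cycle hcycle hcycle)
  rintro a b ⟨⟨ha, hb, hab⟩, hba⟩
  have hba' : TransGen r b a := TransGen.mono toR _ _ hba
  exact ⟨not_mem_U a ha (hba'.head hab), not_mem_U b hb (hba'.tail hab), hab⟩

end

/-- Every minimum grounding set (a grounding set of minimum cardinality) is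
included in the grounding kernel `K` (the stable value of iterating `Out0`
starting from `V`). -/
theorem minimum_grounding_set_subset_kernel {V : Type*} [Finite V]
    (r : V → V → Prop) (K : Set V)
    (hK : ∃ ℓ : ℕ, ∀ n : ℕ, n ≥ ℓ → (Out0 r)^[n] (Set.univ : Set V) = K)
    (U : Set V) (hU : IsGroundingSet r U)
    (hmin : ∀ U' : Set V, IsGroundingSet r U' → U.ncard ≤ U'.ncard) :
    U ⊆ K := by
  obtain ⟨ℓ, hℓ⟩ := hK
  have hcyclic : {v | TransGen r v v} ⊆ K := hℓ ℓ le_rfl ▸ cyclic_subset_iterate_Out0 ℓ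
  have hUK : U ∩ K = U :=
    Set.eq_of_subset_of_ncard_le Set.inter_subset_left
      (hmin _ (hU.inter_of_cyclic_subset hcyclic)) U.toFinite
  exact hUK ▸ Set.inter_subset_right
end

section
/- Let r be an acyclic relation on a finite vertex set V (no vertex v satisfies Relation.TransGen r v v). Then the grounding kernel of (V, r) is empty: iterating the sink-removal operator Out0 starting from V stabilizes at the empty set. -/
section

variable {V : Type*} (r : V → V → Prop)

theorem Out0_subset (S : Set V) : Out0 r S ⊆ S :=
  Set.sep_subset _ _

theorem antitone_iterate_Out0 (S : Set V) : Antitone fun n => (Out0 r)^[n] S :=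
  antitone_nat_of_succ_le fun n => by
    rw [Function.iterate_succ_apply']
    exact Out0_subset r _

variable {r}

theorem eq_empty_of_subset_Out0 (hwf : WellFounded (flip r)) {S : Set V} (hS : S ⊆ Out0 r S) :
    S = ∅ := by
  by_contra hne
  obtain ⟨v, hvS, hmin⟩ := hwf.has_min S (Set.nonempty_iff_ne_empty.mpr hne)
  obtain ⟨-, u, huS, hvu⟩ := hS hvS
  exact hmin u huS hvu

end

theorem wellFounded_flip_of_acyclic {V : Type*} [Finite V] {r : V → V → Prop}
    (hacyc : ∀ v : V, ¬ Relation.TransGen r v v) : WellFounded (flip r) := by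
  have : IsTrans V (flip (Relation.TransGen r)) := ⟨fun _ _ _ hab hbc => hbc.trans hab⟩
  have : Std.Irrefl (flip (Relation.TransGen r)) := ⟨hacyc⟩
  exact Subrelation.wf (r := flip (Relation.TransGen r)) (fun h => .single h)
    (Finite.wellFounded_of_trans_of_irrefl _)

/-- If `r` is acyclic on a finite vertex set (no vertex lies on a directed
cycle), then the grounding kernel is empty: iterating `Out0` from `V`
stabilizes at the empty set. -/
theorem acyclic_grounding_kernel_empty {V : Type*} [Finite V]
    (r : V → V → Prop) (hacyc : ∀ v : V, ¬ Relation.TransGen r v v) :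
    ∃ ℓ : ℕ, ∀ n : ℕ, n ≥ ℓ →
      (Out0 r)^[n] (Set.univ : Set V) = (∅ : Set V) := by
  let kernelChain : ℕ →o (Set V)ᵒᵈ :=
    ⟨fun n => OrderDual.toDual ((Out0 r)^[n] Set.univ), (antitone_iterate_Out0 r _).dual_right⟩
  obtain ⟨ℓ, hstable⟩ := WellFoundedGT.monotone_chain_condition kernelChain
  have hfix : (Out0 r)^[ℓ] Set.univ ⊆ Out0 r ((Out0 r)^[ℓ] Set.univ) := by
    rw [← Function.iterate_succ_apply' (Out0 r)]
    exact (hstable (ℓ + 1) ℓ.le_succ).ge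
  have hempty := eq_empty_of_subset_Out0 (wellFounded_flip_of_acyclic hacyc) hfix
  exact ⟨ℓ, fun n hn => (hstable n hn).symm.trans hempty⟩
end

section
/- Let r be a relation on a finite vertex set V without sources (every vertex has a predecessor), and let K be the grounding kernel of (V, r). Then there exists a unique GK-level function L : V → ℕ such that L v = 0 for all v ∈ K, and for every v ∉ K, L v = 1 + max { L u | r u v } (the maximum of L over the predecessors of v, which form a nonempty finite set). -/
/-!
Let `S n` be the `n`-th iterate of `Out0` from `V`, so `S ℓ = K`. A predecessor of a vertex of
`S m` lies in `S (m + 1)`, hence an `r`-predecessor `u` of a vertex `v ∉ K` survives strictly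
longer than `v`. So the relation "`r u v` with `v ∉ K`" is well-founded, and the recursion
defining `L` depends at `v` only on the values at such predecessors `u`: by well-founded
recursion it has exactly one solution.
-/

open Set

theorem WellFounded.existsUnique_isFixedPt {V α : Type*} [Nonempty α] {R : V → V → Prop}
    (hR : WellFounded R) (F : (V → α) → V → α)
    (hF : ∀ L L' v, (∀ u, R u v → L u = L' u) → F L v = F L' v) :
    ∃! L, Function.IsFixedPt F L := by
  classical
  refine ⟨hR.fix fun v rec ↦ F (fun u ↦ if h : R u v then rec u h else Classical.arbitrary α) v,
    ?_, ?_⟩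
  · funext v
    rw [hR.fix_eq]
    exact hF _ _ v fun u huv ↦ by simp only [dif_pos huv]
  · intro L hL
    funext v
    induction v using hR.induction with
    | _ v ih =>
      rw [hR.fix_eq, ← hL]
      exact hF _ _ v fun u huv ↦ by simp only [ih u huv, dif_pos huv]

section GroundingKernel

variable {V : Type*} (r : V → V → Prop)

theorem iterate_Out0_succ_subset (n : ℕ) :
    (Out0 r)^[n + 1] univ ⊆ (Out0 r)^[n] univ := by
  rw [Function.iterate_succ_apply']
  exact fun _ hv ↦ hv.1

theorem mem_iterate_Out0_succ_of_rel {u v : V} (huv : r u v) :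
    ∀ {m : ℕ}, v ∈ (Out0 r)^[m] univ → u ∈ (Out0 r)^[m + 1] univ
  | 0, _ => by simpa [Out0] using ⟨v, huv⟩
  | m + 1, hv => by
    rw [Function.iterate_succ_apply']
    exact ⟨mem_iterate_Out0_succ_of_rel huv (iterate_Out0_succ_subset r m hv), v, hv, huv⟩

theorem wellFounded_rel_of_not_mem_kernel {K : Set V} {ℓ : ℕ}
    (hK : (Out0 r)^[ℓ] univ = K) : WellFounded fun u v ↦ r u v ∧ v ∉ K := by
  have hacc : ∀ m ≤ ℓ, ∀ v ∈ (Out0 r)^[m] univ, Acc (fun u v ↦ r u v ∧ v ∉ K) v := by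
    intro m hm
    induction hm using Nat.decreasingInduction with
    | self => exact fun v hv ↦ ⟨_, fun u huv ↦ absurd (hK ▸ hv) huv.2⟩
    | of_succ m _ ih =>
      exact fun v hv ↦ ⟨_, fun u huv ↦ ih u (mem_iterate_Out0_succ_of_rel r huv.1 hv)⟩
  exact ⟨fun v ↦ hacc 0 ℓ.zero_le v (mem_univ v)⟩

end GroundingKernel

section LevelStep

variable {V : Type*} (r : V → V → Prop) (K : Set V)

open Classical in
noncomputable def levelStep (L : V → ℕ) (v : V) : ℕ :=
  if v ∈ K then 0 else 1 + sSup (L '' {u | r u v})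

theorem levelStep_congr (L L' : V → ℕ) (v : V) (h : ∀ u, r u v ∧ v ∉ K → L u = L' u) :
    levelStep r K L v = levelStep r K L' v := by
  by_cases hv : v ∈ K
  · simp only [levelStep, if_pos hv]
  · simp only [levelStep, if_neg hv]
    exact congrArg (1 + sSup ·) (image_congr fun u huv ↦ h u ⟨huv, hv⟩)

theorem isFixedPt_levelStep_iff (L : V → ℕ) :
    Function.IsFixedPt (levelStep r K) L ↔
      (∀ v ∈ K, L v = 0) ∧ ∀ v ∉ K, L v = 1 + sSup (L '' {u | r u v}) := by
  simp only [Function.IsFixedPt, funext_iff, levelStep]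
  constructor
  · intro h
    exact ⟨fun v hv ↦ by simpa [hv] using (h v).symm, fun v hv ↦ by simpa [hv] using (h v).symm⟩
  · rintro ⟨hK, hnK⟩ v
    by_cases hv : v ∈ K <;> simp [hv, hK, hnK]

end LevelStep

theorem unique_gk_level_function_general {V : Type*}
    (r : V → V → Prop)
    (K : Set V)
    (hK : ∃ ℓ : ℕ, ∀ n : ℕ, n ≥ ℓ → (Out0 r)^[n] (Set.univ : Set V) = K) :
    ∃! L : V → ℕ,
      (∀ v ∈ K, L v = 0) ∧
      (∀ v ∉ K, L v = 1 + sSup (L '' {u : V | r u v})) := by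
  obtain ⟨ℓ, hℓ⟩ := hK
  have hwf := wellFounded_rel_of_not_mem_kernel r (hℓ ℓ le_rfl)
  exact (existsUnique_congr (isFixedPt_levelStep_iff r K)).mp <|
    hwf.existsUnique_isFixedPt (levelStep r K) (levelStep_congr r K)

/-- For a relation without sources on a finite vertex set, with grounding
kernel `K` (the stable value of iterating `Out0` from `V`), there is a unique
GK-level function `L : V → ℕ` with `L v = 0` for `v ∈ K` and
`L v = 1 + max {L u | r u v}` for `v ∉ K` (the maximum, taken over the
nonempty finite set of predecessors of `v`, is expressed with `sSup`). -/
theorem unique_gk_level_function {V : Type*} [Finite V]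
    (r : V → V → Prop) (hnosrc : ∀ v : V, ∃ u : V, r u v)
    (K : Set V)
    (hK : ∃ ℓ : ℕ, ∀ n : ℕ, n ≥ ℓ → (Out0 r)^[n] (Set.univ : Set V) = K) :
    ∃! L : V → ℕ,
      (∀ v ∈ K, L v = 0) ∧
      (∀ v ∉ K, L v = 1 + sSup (L '' {u : V | r u v})) :=
  unique_gk_level_function_general r K hK
end
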